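/- Let ‖·‖ be a norm on c₀₀ satisfying equation (1.1), and let (x_i) be a normalized block basis of (e_i) admitting a spreading model with norm L. Then for every p with 1 < p < ∞, the unit vector basis of ℓ_p is not block finitely represented in the spreading model: there exist ε > 0 and n ∈ ℕ such that no finite sequence z₁ < z₂ < ⋯ < z_n of nonzero vectors of c₀₀ satisfies (1+ε)^{-1}(∑_{i=1}^n |a_i|^p)^{1/p} ≤ L(∑_{i=1}^n a_i z_i) ≤ (1+ε)(∑_{i=1}^n |a_i|^p)^{1/p} for all (a_i) ∈ ℝ^n. The same conclusion holds for c₀, i.e. with (∑ |a_i|^p)^{1/p} replaced by max_{i≤n} |a_i|. -/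

import Mathlib

open Finset

/-- `c₀₀`: finitely supported functions `ℕ → ℝ`. -/
abbrev C00 := ℕ →₀ ℝ

/-- `f(t) = log₂(1+t)`. -/
noncomputable def f (t : ℝ) : ℝ := Real.logb 2 (1 + t)

/-- `E < F` for finite sets: every element of `E` is less than every element of `F`. -/
def FinsetLT (E F : Finset ℕ) : Prop := ∀ i ∈ E, ∀ j ∈ F, i < j

/-- `Ex`: coordinatewise product of `x` with the indicator of `E`. -/
noncomputable def restr (E : Finset ℕ) (x : C00) : C00 := x.filter (· ∈ E)

/-- `N` is a norm on `c₀₀`. -/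
def IsNorm (N : C00 → ℝ) : Prop :=
  (∀ x y, N (x + y) ≤ N x + N y) ∧
  (∀ (c : ℝ) (x), N (c • x) = |c| * N x) ∧
  (∀ x, x ≠ 0 → 0 < N x)

/-- the sup norm `‖x‖_∞`. -/
noncomputable def supNorm (x : C00) : ℝ := ⨆ i, |x i|

/-- `‖x‖_k = sup{(1/f(k)) ∑_{i=1}^k ‖E_i x‖ : E₁ < ⋯ < E_k}`. -/
noncomputable def normK (N : C00 → ℝ) (k : ℕ) (x : C00) : ℝ :=
  sSup {r | ∃ E : Fin k → Finset ℕ,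
    (∀ i j : Fin k, i < j → FinsetLT (E i) (E j)) ∧
    r = (1 / f k) * ∑ i, N (restr (E i) x)}

/-- Equation (1.1): `‖x‖ = max{‖x‖_∞, (∑_k ‖x‖_{n_k}²)^{1/2}}`. -/
def Eq11 (nseq : ℕ → ℕ) (N : C00 → ℝ) : Prop :=
  ∀ x, N x = max (supNorm x) (Real.sqrt (∑' k, (normK N (nseq k) x) ^ 2))

/-- A finite block basis: nonzero vectors with successive supports. -/
def BlockSeqFin {n : ℕ} (y : Fin n → C00) : Prop :=
  (∀ i, y i ≠ 0) ∧ ∀ i j : Fin n, i < j → FinsetLT (y i).support (y j).support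

/-- An infinite block basis of `(e_i)`: nonzero vectors with successive supports. -/
def BlockSeqInf (y : ℕ → C00) : Prop :=
  (∀ i, y i ≠ 0) ∧ ∀ i, FinsetLT (y i).support (y (i + 1)).support

/-- the unit vectors `e_i` of `c₀₀`. -/
noncomputable def e (i : ℕ) : C00 := Finsupp.single i 1

/-- `(x_i)` admits a spreading model with norm `L`: the limits
`L(b) = lim_{ℓ→∞; ℓ<i₁<⋯<i_m} ‖∑ b_j x_{i_j}‖` exist, and `L` (as a norm on `c₀₀`)
is the spreading-invariant extension. -/
def SpreadingModel (N : C00 → ℝ) (x : ℕ → C00) (L : C00 → ℝ) : Prop :=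
  (∀ (m : ℕ) (b : Fin m → ℝ) (κ : Fin m → ℕ), StrictMono κ →
      L (∑ j, b j • e (κ j)) = L (∑ j, b j • e (j : ℕ))) ∧
  (∀ (m : ℕ) (b : Fin m → ℝ), ∀ δ > 0, ∃ ℓ : ℕ,
      ∀ i : Fin m → ℕ, StrictMono i → (∀ j, ℓ < i j) →
        |N (∑ j, b j • x (i j)) - L (∑ j, b j • e (j : ℕ))| < δ)

lemma one_le_f {k : ℕ} (hk : 1 ≤ k) : 1 ≤ f k := by
  have hk' : (1:ℝ) ≤ (k:ℝ) := by exact_mod_cast hk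
  have h2 : (2:ℝ) ≤ 1 + (k:ℝ) := by linarith
  calc (1:ℝ) = Real.logb 2 2 := (Real.logb_self_eq_one (by norm_num : (1:ℝ) < 2)).symm
    _ ≤ f k := Real.logb_le_logb_of_le (by norm_num) (by norm_num) h2

lemma f_pos {k : ℕ} (hk : 1 ≤ k) : 0 < f k := lt_of_lt_of_le one_pos (one_le_f hk)

lemma IsNorm.zero {N : C00 → ℝ} (hN : IsNorm N) : N 0 = 0 := by
  have := hN.2.1 0 0; simpa using this

lemma IsNorm.nonneg {N : C00 → ℝ} (hN : IsNorm N) (x : C00) : 0 ≤ N x := by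
  have h1 := hN.1 x (-x)
  have h2 : N (-x) = N x := by
    have := hN.2.1 (-1) x; simpa using this
  have h0 : N (x + -x) = 0 := by simpa using hN.zero
  nlinarith

lemma restr_apply (E : Finset ℕ) (x : C00) (i : ℕ) :
    restr E x i = if i ∈ E then x i else 0 := by
  simp [restr, Finsupp.filter_apply]

lemma restr_empty (x : C00) : restr ∅ x = 0 := by
  ext i; simp [restr_apply]

lemma N_sum_le {N : C00 → ℝ} (hN : IsNorm N) {ι : Type*} (s : Finset ι) (g : ι → C00) :
    N (∑ i ∈ s, g i) ≤ ∑ i ∈ s, N (g i) := by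
  classical
  induction s using Finset.induction with
  | empty => simp [hN.zero]
  | insert _ _ hnot ih =>
      rename_i a s'
      rw [Finset.sum_insert hnot, Finset.sum_insert hnot]
      exact le_trans (hN.1 _ _) (by linarith)

lemma N_le_C {N : C00 → ℝ} (hN : IsNorm N) (w : C00) :
    N w ≤ ∑ j ∈ w.support, |w j| * N (e j) := by
  have hw : w = ∑ j ∈ w.support, (w j) • e j := by
    ext q
    rw [Finsupp.finset_sum_apply]
    simp only [Finsupp.smul_apply, e, Finsupp.single_apply, smul_eq_mul]
    by_cases hq : q ∈ w.support
    · rw [Finset.sum_eq_single q]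
      · simp
      · intro b _ hbq; simp [hbq]
      · intro h; simp at h; simp [h]
    · have : w q = 0 := by simpa using hq
      rw [this, Finset.sum_eq_zero]
      intro b hb
      have : b ≠ q := by rintro rfl; exact hq hb
      simp [this]
  calc N w = N (∑ j ∈ w.support, (w j) • e j) := by rw [← hw]
    _ ≤ ∑ j ∈ w.support, N ((w j) • e j) := N_sum_le hN _ _
    _ = ∑ j ∈ w.support, |w j| * N (e j) := by
        apply Finset.sum_congr rfl; intro j _; exact hN.2.1 _ _

noncomputable def Cy (N : C00 → ℝ) (y : C00) : ℝ := ∑ j ∈ y.support, |y j| * N (e j)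

lemma Cy_nonneg {N : C00 → ℝ} (hN : IsNorm N) (y : C00) : 0 ≤ Cy N y :=
  Finset.sum_nonneg fun j _ => mul_nonneg (abs_nonneg _) (hN.nonneg _)

lemma restr_support_subset (E : Finset ℕ) (y : C00) :
    (restr E y).support ⊆ y.support ∩ E := by
  intro j hj
  rw [Finsupp.mem_support_iff, restr_apply] at hj
  by_cases hE : j ∈ E
  · simp only [hE, if_true] at hj
    exact Finset.mem_inter.mpr ⟨Finsupp.mem_support_iff.mpr hj, hE⟩
  · simp [hE] at hj

/-- key combinatorial bound: for increasing families, the total sum is at most `Cy`. -/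
lemma sum_restr_le {N : C00 → ℝ} (hN : IsNorm N) (y : C00) {k : ℕ} (E : Fin k → Finset ℕ)
    (hE : ∀ i j : Fin k, i < j → FinsetLT (E i) (E j)) :
    ∑ i, N (restr (E i) y) ≤ Cy N y := by
  classical
  have hdisj : ∀ i j : Fin k, i ≠ j → Disjoint (y.support ∩ E i) (y.support ∩ E j) := by
    intro i j hij
    rcases lt_or_gt_of_ne hij with h | h
    · refine Finset.disjoint_left.mpr ?_
      intro a ha hb
      exact absurd (hE i j h a (Finset.mem_inter.mp ha).2 a (Finset.mem_inter.mp hb).2) (lt_irrefl a)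
    · refine Finset.disjoint_left.mpr ?_
      intro a ha hb
      exact absurd (hE j i h a (Finset.mem_inter.mp hb).2 a (Finset.mem_inter.mp ha).2) (lt_irrefl a)
  have step1 : ∀ i, N (restr (E i) y) ≤ ∑ j ∈ y.support ∩ E i, |y j| * N (e j) := by
    intro i
    refine le_trans (N_le_C hN _) ?_
    have heq : ∀ j ∈ y.support ∩ E i, |restr (E i) y j| * N (e j) = |y j| * N (e j) := by
      intro j hj
      rw [restr_apply, if_pos (Finset.mem_inter.mp hj).2]
    calc ∑ j ∈ (restr (E i) y).support, |restr (E i) y j| * N (e j)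
        ≤ ∑ j ∈ y.support ∩ E i, |restr (E i) y j| * N (e j) := by
          apply Finset.sum_le_sum_of_subset_of_nonneg (restr_support_subset _ _)
          intro j _ _; exact mul_nonneg (abs_nonneg _) (hN.nonneg _)
      _ = ∑ j ∈ y.support ∩ E i, |y j| * N (e j) := Finset.sum_congr rfl heq
  calc ∑ i, N (restr (E i) y) ≤ ∑ i, ∑ j ∈ y.support ∩ E i, |y j| * N (e j) :=
        Finset.sum_le_sum fun i _ => step1 i
    _ = ∑ j ∈ Finset.univ.biUnion (fun i => y.support ∩ E i), |y j| * N (e j) := by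
        rw [Finset.sum_biUnion]
        intro i _ j _ hij
        exact hdisj i j hij
    _ ≤ Cy N y := by
        apply Finset.sum_le_sum_of_subset_of_nonneg
        · intro j hj
          rcases Finset.mem_biUnion.mp hj with ⟨i, _, hji⟩
          exact (Finset.mem_inter.mp hji).1
        · intro j _ _; exact mul_nonneg (abs_nonneg _) (hN.nonneg _)

def normKset (N : C00 → ℝ) (k : ℕ) (x : C00) : Set ℝ :=
  {r | ∃ E : Fin k → Finset ℕ,
    (∀ i j : Fin k, i < j → FinsetLT (E i) (E j)) ∧
    r = (1 / f k) * ∑ i, N (restr (E i) x)}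

lemma normK_eq {N : C00 → ℝ} (k : ℕ) (x : C00) : normK N k x = sSup (normKset N k x) := rfl

lemma normKset_nonempty {N : C00 → ℝ} (hN : IsNorm N) (k : ℕ) (x : C00) : (0:ℝ) ∈ normKset N k x := by
  refine ⟨fun _ => ∅, fun i j _ => by intro a ha; simp at ha, ?_⟩
  simp [restr_empty, hN.zero]

lemma normKset_bdd {N : C00 → ℝ} (hN : IsNorm N) {k : ℕ} (hk : 1 ≤ k) (x : C00) :
    ∀ r ∈ normKset N k x, r ≤ (1 / f k) * Cy N x := by
  rintro r ⟨E, hE, rfl⟩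
  have h1 : 0 ≤ 1 / f k := le_of_lt (one_div_pos.mpr (f_pos hk))
  exact mul_le_mul_of_nonneg_left (sum_restr_le hN x E hE) h1

lemma normK_nonneg {N : C00 → ℝ} (hN : IsNorm N) {k : ℕ} (hk : 1 ≤ k) (x : C00) : 0 ≤ normK N k x :=
  le_csSup ⟨(1 / f k) * Cy N x, fun r hr => normKset_bdd hN hk x r hr⟩ (normKset_nonempty hN k x)

lemma normK_le {N : C00 → ℝ} (hN : IsNorm N) {k : ℕ} (hk : 1 ≤ k) (x : C00) :
    normK N k x ≤ (1 / f k) * Cy N x :=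
  csSup_le ⟨0, normKset_nonempty hN k x⟩ (normKset_bdd hN hk x)

lemma le_normK {N : C00 → ℝ} (hN : IsNorm N) {k : ℕ} (hk : 1 ≤ k) (x : C00) {r : ℝ}
    (hr : r ∈ normKset N k x) : r ≤ normK N k x :=
  le_csSup ⟨(1 / f k) * Cy N x, fun s hs => normKset_bdd hN hk x s hs⟩ hr
lemma sq_summable {N : C00 → ℝ} {nseq : ℕ → ℕ} (hN : IsNorm N) (hpos : ∀ k, 0 < nseq k)
    (hsumm : Summable fun k => 1 / f (nseq k)) (y : C00) :
    Summable fun k => (normK N (nseq k) y) ^ 2 := by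
  have key : ∀ k, (normK N (nseq k) y)^2 ≤ (Cy N y)^2 * (1 / f (nseq k)) := by
    intro k
    have hk1 : 1 ≤ nseq k := hpos k
    have hf1 : 1 ≤ f (nseq k) := one_le_f hk1
    have hf0 : 0 < f (nseq k) := f_pos hk1
    set u : ℝ := 1 / f (nseq k) with hu
    have hu0 : 0 < u := one_div_pos.mpr hf0
    have hu1 : u ≤ 1 := by
      rw [hu, div_le_one hf0]; exact hf1
    have ht0 : 0 ≤ normK N (nseq k) y := normK_nonneg hN hk1 y
    have ht : normK N (nseq k) y ≤ u * Cy N y := normK_le hN hk1 y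
    have hc : 0 ≤ Cy N y := Cy_nonneg hN y
    nlinarith [mul_self_le_mul_self ht0 ht, sq_nonneg (Cy N y), mul_nonneg hc hu0.le]
  exact Summable.of_nonneg_of_le (fun k => sq_nonneg _) key (hsumm.mul_left _)

/-- the key lower estimate from Eq (1.1). -/
lemma lower_est {N : C00 → ℝ} {nseq : ℕ → ℕ} (hN : IsNorm N) (hpos : ∀ k, 0 < nseq k)
    (hsumm : Summable fun k => 1 / f (nseq k)) (hEq : Eq11 nseq N)
    (y : C00) (k : ℕ) (E : Fin (nseq k) → Finset ℕ)
    (hE : ∀ i j : Fin (nseq k), i < j → FinsetLT (E i) (E j)) :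
    (1 / f (nseq k)) * ∑ i, N (restr (E i) y) ≤ N y := by
  have hk1 : 1 ≤ nseq k := hpos k
  have hr : (1 / f (nseq k)) * ∑ i, N (restr (E i) y) ∈ normKset N (nseq k) y := ⟨E, hE, rfl⟩
  have h1 : (1 / f (nseq k)) * ∑ i, N (restr (E i) y) ≤ normK N (nseq k) y :=
    le_normK hN hk1 y hr
  refine h1.trans ?_
  have hsum := sq_summable hN hpos hsumm y
  have h2 : (normK N (nseq k) y)^2 ≤ ∑' j, (normK N (nseq j) y)^2 :=
    Summable.le_tsum hsum k (fun j _ => sq_nonneg _)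
  have h3 : normK N (nseq k) y ≤ Real.sqrt (∑' j, (normK N (nseq j) y)^2) := by
    have := Real.sqrt_le_sqrt h2
    rwa [Real.sqrt_sq (normK_nonneg hN hk1 y)] at this
  refine h3.trans ?_
  rw [hEq y]
  exact le_max_right _ _

lemma sum_single_eq (w : C00) (m : ℕ) (h : ∀ j ∈ w.support, j < m) :
    ∑ j : Fin m, w (j:ℕ) • e (j:ℕ) = w := by
  ext q
  rw [Finsupp.finset_sum_apply]
  simp only [Finsupp.smul_apply, e, Finsupp.single_apply, smul_eq_mul]
  by_cases hq : q < m
  · rw [Finset.sum_eq_single (⟨q, hq⟩ : Fin m)]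
    · simp
    · intro b _ hbq
      have hb : (b:ℕ) ≠ q := by
        intro hc; exact hbq (Fin.ext hc)
      simp [hb]
    · simp
  · have hq0 : w q = 0 := by
      by_contra hc
      exact hq (h q (Finsupp.mem_support_iff.mpr hc))
    rw [hq0, Finset.sum_eq_zero]
    intro b _
    have hb : (b:ℕ) ≠ q := by
      have := b.isLt; omega
    simp [hb]

lemma blockLT {x : ℕ → C00} (hx : BlockSeqInf x) :
    ∀ a b : ℕ, a < b → FinsetLT (x a).support (x b).support := by
  intro a b
  induction b with
  | zero => omega
  | succ b ih =>
      intro hab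
      rcases Nat.lt_succ_iff_lt_or_eq.mp hab with h | h
      · intro p hp q hq
        obtain ⟨r, hr⟩ := Finsupp.support_nonempty_iff.mpr (hx.1 b)
        exact lt_trans (ih h p hp r hr) (hx.2 b r hr q hq)
      · subst h; exact hx.2 a

lemma main_est {nseq : ℕ → ℕ} (hpos : ∀ k, 0 < nseq k)
    (hsumm : Summable fun k => 1 / f (nseq k))
    {N : C00 → ℝ} (hN : IsNorm N) (hEq : Eq11 nseq N)
    {x : ℕ → C00} (hx : BlockSeqInf x)
    {L : C00 → ℝ} (hSM : SpreadingModel N x L) (k : ℕ)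
    (z : Fin (nseq k) → C00) (hz : BlockSeqFin z)
    (hz1 : ∀ t, (1:ℝ)/2 ≤ L (z t)) (R : ℝ)
    (hR : L (∑ t, z t) ≤ R) :
    (nseq k : ℝ) / (2 * f (nseq k)) ≤ R := by
  classical
  have hn1 : 1 ≤ nseq k := hpos k
  have hf0 : 0 < f (nseq k) := f_pos hn1
  have key : ∀ δ : ℝ, 0 < δ →
      (1 / f (nseq k)) * ((nseq k : ℝ) * (1/2 - δ)) ≤ R + δ := by
    intro δ hδ
    -- set-up
    set Z : C00 := ∑ t, z t with hZ
    set S : Finset ℕ := Finset.univ.biUnion (fun t : Fin (nseq k) => (z t).support) with hS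
    set m : ℕ := S.sup (· + 1) with hm
    have hmem : ∀ t : Fin (nseq k), ∀ j ∈ (z t).support, j < m := by
      intro t j hj
      have hjS : j ∈ S := Finset.mem_biUnion.mpr ⟨t, Finset.mem_univ t, hj⟩
      have : j + 1 ≤ m := Finset.le_sup (f := (· + 1)) hjS
      omega
    have hZsupp : ∀ j ∈ Z.support, j < m := by
      intro j hj
      have := Finsupp.support_finset_sum (s := Finset.univ) (f := z) hj
      rcases Finset.mem_biUnion.mp this with ⟨t, _, hjt⟩
      exact hmem t j hjt
    have hZapp : ∀ j : ℕ, Z j = ∑ t, z t j := by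
      intro j; rw [hZ, Finsupp.finset_sum_apply]
    -- choose spreading levels
    obtain ⟨ℓ₀, spec₀⟩ := hSM.2 m (fun j : Fin m => Z (j:ℕ)) δ hδ
    have hchoice := fun t : Fin (nseq k) => hSM.2 m (fun j : Fin m => z t (j:ℕ)) δ hδ
    choose ℓt specT using hchoice
    set ℓ : ℕ := max ℓ₀ (Finset.univ.sup ℓt) with hℓ
    set i : Fin m → ℕ := fun j => ℓ + 1 + j with hi
    have hiSM : StrictMono i := by
      intro a b hab
      simp only [hi]
      have : (a:ℕ) < b := hab
      omega
    have higt : ∀ c : ℕ, c ≤ ℓ → ∀ j, c < i j := by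
      intro c hc j; simp only [hi]; omega
    -- the vectors
    set Y : Fin (nseq k) → C00 := fun t => ∑ j : Fin m, z t (j:ℕ) • x (i j) with hY
    set Ytot : C00 := ∑ j : Fin m, Z (j:ℕ) • x (i j) with hYtot
    have hYtotY : Ytot = ∑ t, Y t := by
      rw [hYtot]
      have : ∀ j : Fin m, Z (j:ℕ) • x (i j) = ∑ t, z t (j:ℕ) • x (i j) := by
        intro j
        rw [hZapp, Finset.sum_smul]
      rw [Finset.sum_congr rfl fun j _ => this j]
      exact Finset.sum_comm
    -- limits
    have hbZ : ∑ j : Fin m, Z (j:ℕ) • e (j:ℕ) = Z := sum_single_eq Z m hZsupp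
    have hbt : ∀ t, ∑ j : Fin m, z t (j:ℕ) • e (j:ℕ) = z t :=
      fun t => sum_single_eq (z t) m (hmem t)
    have hNtot : |N Ytot - L Z| < δ := by
      have := spec₀ i hiSM (higt ℓ₀ (le_max_left _ _))
      rwa [hbZ] at this
    have hNt : ∀ t, |N (Y t) - L (z t)| < δ := by
      intro t
      have hle : ℓt t ≤ ℓ := le_trans (Finset.le_sup (Finset.mem_univ t)) (le_max_right _ _)
      have := specT t i hiSM (higt (ℓt t) hle)
      rwa [hbt t] at this
    -- support structure
    have memY : ∀ t q, q ∈ (Y t).support →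
        ∃ j : Fin m, (j:ℕ) ∈ (z t).support ∧ q ∈ (x (i j)).support := by
      intro t q hq
      rw [hY] at hq
      have := Finsupp.support_finset_sum (s := Finset.univ)
        (f := fun j : Fin m => z t (j:ℕ) • x (i j)) hq
      rcases Finset.mem_biUnion.mp this with ⟨j, _, hqj⟩
      have hqj' : q ∈ ((z t (j:ℕ)) • x (i j)).support := hqj
      by_cases hzt : z t (j:ℕ) = 0
      · rw [hzt, zero_smul] at hqj'; simp at hqj'
      · refine ⟨j, Finsupp.mem_support_iff.mpr hzt, ?_⟩
        exact Finsupp.support_smul hqj'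
    have hLT : ∀ t t' : Fin (nseq k), t < t' → FinsetLT (Y t).support (Y t').support := by
      intro t t' htt' p hp q hq
      obtain ⟨j, hj, hpj⟩ := memY t p hp
      obtain ⟨j', hj', hqj⟩ := memY t' q hq
      have hjj : (j:ℕ) < (j':ℕ) := hz.2 t t' htt' (j:ℕ) hj (j':ℕ) hj'
      have hij : i j < i j' := hiSM (by exact hjj)
      exact blockLT hx (i j) (i j') hij p hpj q hqj
    have hrestr : ∀ t, restr ((Y t).support) Ytot = Y t := by
      intro t
      ext q
      rw [restr_apply]
      by_cases hq : q ∈ (Y t).support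
      · rw [if_pos hq]
        rw [hYtotY, Finsupp.finset_sum_apply]
        rw [Finset.sum_eq_single t]
        · intro s _ hst
          by_contra hc
          have hqs : q ∈ (Y s).support := Finsupp.mem_support_iff.mpr hc
          rcases lt_or_gt_of_ne hst with h | h
          · exact absurd (hLT s t h q hqs q hq) (lt_irrefl q)
          · exact absurd (hLT t s h q hq q hqs) (lt_irrefl q)
        · intro h; exact absurd (Finset.mem_univ t) h
      · rw [if_neg hq]
        exact (Finsupp.notMem_support_iff.mp hq).symm
    -- lower estimate
    have hlow := lower_est hN hpos hsumm hEq Ytot k (fun t => (Y t).support) hLT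
    have hlow' : (1 / f (nseq k)) * ∑ t, N (Y t) ≤ N Ytot := by
      have : ∀ t : Fin (nseq k), N (restr ((Y t).support) Ytot) = N (Y t) := by
        intro t; rw [hrestr t]
      rwa [Finset.sum_congr rfl fun t _ => this t] at hlow
    -- combine
    have h5 : ∀ t, 1/2 - δ ≤ N (Y t) := by
      intro t
      have h := (abs_lt.mp (hNt t)).1
      have := hz1 t
      linarith
    have h6 : N Ytot ≤ R + δ := by
      have h := (abs_lt.mp hNtot).2
      linarith
    have h7 : (nseq k : ℝ) * (1/2 - δ) ≤ ∑ t, N (Y t) := by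
      calc (nseq k : ℝ) * (1/2 - δ) = ∑ _t : Fin (nseq k), (1/2 - δ) := by
            rw [Finset.sum_const, Finset.card_univ, Fintype.card_fin, nsmul_eq_mul]
        _ ≤ ∑ t, N (Y t) := Finset.sum_le_sum fun t _ => h5 t
    calc (1 / f (nseq k)) * ((nseq k : ℝ) * (1/2 - δ))
        ≤ (1 / f (nseq k)) * ∑ t, N (Y t) := by
          apply mul_le_mul_of_nonneg_left h7 (by positivity)
      _ ≤ N Ytot := hlow'
      _ ≤ R + δ := h6
  -- pass to the limit δ → 0
  refine le_of_forall_pos_le_add ?_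
  intro η hη
  set c : ℝ := 1 + (nseq k : ℝ) / f (nseq k) with hc
  have hc1 : 1 ≤ c := by
    rw [hc]
    have : 0 ≤ (nseq k : ℝ) / f (nseq k) := by positivity
    linarith
  have hc0 : 0 < c := lt_of_lt_of_le one_pos hc1
  set δ : ℝ := η / c with hδdef
  have hδ : 0 < δ := div_pos hη hc0
  have hkey := key δ hδ
  have harith : (1 / f (nseq k)) * ((nseq k : ℝ) * (1/2 - δ)) =
      (nseq k : ℝ) / (2 * f (nseq k)) - ((nseq k : ℝ) / f (nseq k)) * δ := by
    field_simp
  rw [harith] at hkey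
  have hδc : δ * c = η := by
    rw [hδdef]; field_simp
  have h2 : R + δ + ((nseq k : ℝ) / f (nseq k)) * δ = R + η := by
    rw [← hδc, hc]; ring
  linarith [hkey, h2]

lemma exists_big {q : ℝ} (hq : 0 < q) (hq1 : q ≤ 1) :
    ∃ K : ℕ, ∀ n : ℕ, K ≤ n → 1 ≤ n ∧ 4 * f n < (n:ℝ) ^ q := by
  have hlog2 : 0 < Real.log 2 := Real.log_pos (by norm_num)
  have h := isLittleO_log_rpow_atTop hq
  have hc : (0:ℝ) < Real.log 2 / 16 := by positivity
  have hev := h.def hc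
  rw [Filter.eventually_atTop] at hev
  obtain ⟨X, hX⟩ := hev
  refine ⟨⌈X⌉₊ + 1, ?_⟩
  intro n hn
  have hn1 : 1 ≤ n := by omega
  have hn1R : (1:ℝ) ≤ (n:ℝ) := by exact_mod_cast hn1
  refine ⟨hn1, ?_⟩
  have hXn : X ≤ 1 + (n:ℝ) := by
    have h1 : X ≤ (⌈X⌉₊ : ℝ) := Nat.le_ceil X
    have h2 : (⌈X⌉₊ : ℝ) ≤ (n:ℝ) := by exact_mod_cast Nat.le_of_succ_le hn
    linarith
  have hb := hX (1 + (n:ℝ)) hXn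
  have h1n : (0:ℝ) < 1 + (n:ℝ) := by linarith
  have hlogpos : 0 ≤ Real.log (1 + (n:ℝ)) := Real.log_nonneg (by linarith)
  have hrpos : (0:ℝ) ≤ (1 + (n:ℝ)) ^ q := Real.rpow_nonneg h1n.le q
  rw [Real.norm_eq_abs, Real.norm_eq_abs, abs_of_nonneg hlogpos, abs_of_nonneg hrpos] at hb
  -- (1+n)^q ≤ 2 * n^q
  have h2n : (1 + (n:ℝ)) ≤ 2 * n := by linarith
  have hq2 : (1 + (n:ℝ)) ^ q ≤ (2 * n) ^ q := Real.rpow_le_rpow h1n.le h2n hq.le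
  have hmul : ((2:ℝ) * n) ^ q = 2 ^ q * (n:ℝ) ^ q :=
    Real.mul_rpow (by norm_num) (by positivity)
  have h2q : (2:ℝ) ^ q ≤ 2 := by
    calc (2:ℝ) ^ q ≤ (2:ℝ) ^ (1:ℝ) := Real.rpow_le_rpow_of_exponent_le (by norm_num) hq1
      _ = 2 := Real.rpow_one 2
  have hnq : (0:ℝ) < (n:ℝ) ^ q := Real.rpow_pos_of_pos (by linarith) q
  have hstep : (1 + (n:ℝ)) ^ q ≤ 2 * (n:ℝ) ^ q := by
    calc (1 + (n:ℝ)) ^ q ≤ (2 * n) ^ q := hq2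
      _ = 2 ^ q * (n:ℝ) ^ q := hmul
      _ ≤ 2 * (n:ℝ) ^ q := by nlinarith
  have hlogle : Real.log (1 + (n:ℝ)) ≤ (Real.log 2 / 8) * (n:ℝ) ^ q := by
    calc Real.log (1 + (n:ℝ)) ≤ (Real.log 2 / 16) * ((1 + (n:ℝ)) ^ q) := hb
      _ ≤ (Real.log 2 / 16) * (2 * (n:ℝ) ^ q) := by nlinarith
      _ = (Real.log 2 / 8) * (n:ℝ) ^ q := by ring
  have hfn : f n = Real.log (1 + (n:ℝ)) / Real.log 2 := by
    rw [f, Real.logb]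
  rw [hfn]
  calc 4 * (Real.log (1 + (n:ℝ)) / Real.log 2) ≤ 4 * ((Real.log 2 / 8) * (n:ℝ) ^ q / Real.log 2) := by
        gcongr
    _ = (1/2) * (n:ℝ) ^ q := by field_simp; ring
    _ < (n:ℝ) ^ q := by nlinarith


/-- no `ℓ_p` (`1<p<∞`) nor `c₀` is block finitely represented in any
spreading model of a normalized block basis. -/
theorem statement2 (nseq : ℕ → ℕ) (hmono : StrictMono nseq) (hpos : ∀ k, 0 < nseq k)
    (hsumm : Summable fun k => 1 / f (nseq k))
    (hsum : (∑' k, 1 / f (nseq k)) < 1 / 10)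
    (N : C00 → ℝ) (hN : IsNorm N) (hEq : Eq11 nseq N)
    (x : ℕ → C00) (hx : BlockSeqInf x) (hx1 : ∀ i, N (x i) = 1)
    (L : C00 → ℝ) (hL : IsNorm L) (hSM : SpreadingModel N x L) :
    (∀ p : ℝ, 1 < p →
      ∃ ε > (0 : ℝ), ∃ n : ℕ,
        ¬ ∃ z : Fin n → C00, BlockSeqFin z ∧
            ∀ a : Fin n → ℝ,
              (1 + ε)⁻¹ * (∑ i, |a i| ^ p) ^ (1 / p) ≤ L (∑ i, a i • z i) ∧
              L (∑ i, a i • z i) ≤ (1 + ε) * (∑ i, |a i| ^ p) ^ (1 / p)) ∧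
    (∃ ε > (0 : ℝ), ∃ n : ℕ,
        ¬ ∃ z : Fin n → C00, BlockSeqFin z ∧
            ∀ a : Fin n → ℝ,
              (1 + ε)⁻¹ * (⨆ i, |a i|) ≤ L (∑ i, a i • z i) ∧
              L (∑ i, a i • z i) ≤ (1 + ε) * (⨆ i, |a i|)) := by
  constructor
  · -- ℓ_p case
    intro p hp
    have hp0 : (0:ℝ) < p := by linarith
    refine ⟨1, one_pos, ?_⟩
    have hq : 0 < 1 - 1/p := by
      have h1 : 1/p < 1 := by rw [div_lt_one hp0]; exact hp
      linarith
    have hq1 : 1 - 1/p ≤ 1 := by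
      have : 0 ≤ 1/p := by positivity
      linarith
    obtain ⟨K, hK⟩ := exists_big hq hq1
    refine ⟨nseq K, ?_⟩
    rintro ⟨z, hzb, hzin⟩
    obtain ⟨hn1, hbig⟩ := hK (nseq K) hmono.le_apply
    have hn0R : (0:ℝ) < (nseq K : ℝ) := by exact_mod_cast hn1
    have hf0 : 0 < f (nseq K) := f_pos hn1
    have hz1 : ∀ t, (1:ℝ)/2 ≤ L (z t) := by
      intro t
      have ha := (hzin (fun s => if s = t then 1 else 0)).1
      have hsum1 : ∑ s, (if s = t then (1:ℝ) else 0) • z s = z t := by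
        simp [ite_smul]
      have hsum2 : ∑ s : Fin (nseq K), |if s = t then (1:ℝ) else 0| ^ p = 1 := by
        rw [Finset.sum_eq_single t]
        · simp
        · intro s _ hst
          rw [if_neg hst, abs_zero, Real.zero_rpow (ne_of_gt hp0)]
        · intro h; exact absurd (Finset.mem_univ t) h
      rw [hsum1, hsum2, Real.one_rpow] at ha
      norm_num at ha
      linarith
    have hub := (hzin (fun _ => 1)).2
    have hsum3 : ∑ s : Fin (nseq K), (1:ℝ) • z s = ∑ s, z s := by simp
    have hsum4 : ∑ s : Fin (nseq K), |(1:ℝ)| ^ p = (nseq K : ℝ) := by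
      simp [abs_one, Real.one_rpow]
    rw [hsum3, hsum4] at hub
    have hmain := main_est hpos hsumm hN hEq hx hSM K z hzb hz1 _ hub
    have hppos : 0 < (nseq K:ℝ) ^ (1/p) := Real.rpow_pos_of_pos hn0R _
    have h1 : (nseq K:ℝ) ≤ (1+1) * ((nseq K:ℝ) ^ (1/p)) * (2 * f (nseq K)) :=
      (div_le_iff₀ (by positivity)).mp hmain
    have hpow : (nseq K:ℝ) ^ (1 - 1/p) * (nseq K:ℝ) ^ (1/p) = (nseq K:ℝ) := by
      rw [← Real.rpow_add hn0R]
      norm_num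
    have h2 : 4 * f (nseq K) * ((nseq K:ℝ) ^ (1/p)) <
        (nseq K:ℝ) ^ (1 - 1/p) * ((nseq K:ℝ) ^ (1/p)) :=
      mul_lt_mul_of_pos_right hbig hppos
    nlinarith [h1, h2, hpow]
  · -- c₀ case
    refine ⟨1, one_pos, ?_⟩
    obtain ⟨K, hK⟩ := exists_big one_pos le_rfl
    refine ⟨nseq K, ?_⟩
    rintro ⟨z, hzb, hzin⟩
    obtain ⟨hn1, hbig⟩ := hK (nseq K) hmono.le_apply
    have hn0R : (0:ℝ) < (nseq K : ℝ) := by exact_mod_cast hn1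
    have hf0 : 0 < f (nseq K) := f_pos hn1
    haveI hne : Nonempty (Fin (nseq K)) := ⟨⟨0, hn1⟩⟩
    have hz1 : ∀ t, (1:ℝ)/2 ≤ L (z t) := by
      intro t
      have ha := (hzin (fun s => if s = t then 1 else 0)).1
      have hsum1 : ∑ s, (if s = t then (1:ℝ) else 0) • z s = z t := by
        simp [ite_smul]
      have hsup1 : (⨆ s : Fin (nseq K), |if s = t then (1:ℝ) else 0|) = 1 := by
        apply le_antisymm
        · apply ciSup_le
          intro s
          by_cases h : s = t <;> simp [h]
        · have h1 : |if t = t then (1:ℝ) else 0| = 1 := by simp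
          calc (1:ℝ) = |if t = t then (1:ℝ) else 0| := h1.symm
            _ ≤ ⨆ s : Fin (nseq K), |if s = t then (1:ℝ) else 0| :=
              le_ciSup (f := fun s : Fin (nseq K) => |if s = t then (1:ℝ) else 0|)
                (Set.Finite.bddAbove (Set.finite_range _)) t
      rw [hsum1, hsup1] at ha
      norm_num at ha
      linarith
    have hub := (hzin (fun _ => 1)).2
    have hsum3 : ∑ s : Fin (nseq K), (1:ℝ) • z s = ∑ s, z s := by simp
    have hsup4 : (⨆ _s : Fin (nseq K), |(1:ℝ)|) = 1 := by
      rw [ciSup_const]; exact abs_one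
    rw [hsum3, hsup4] at hub
    have hmain := main_est hpos hsumm hN hEq hx hSM K z hzb hz1 _ hub
    have hpow : (nseq K:ℝ) ^ (1:ℝ) = (nseq K:ℝ) := Real.rpow_one _
    rw [hpow] at hbig
    have h1 : (nseq K:ℝ) ≤ (1+1) * 1 * (2 * f (nseq K)) :=
      (div_le_iff₀ (by positivity)).mp hmain
    nlinarith [h1, hbig]
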